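/- arXiv:2408.03814 — 4 statements merged into one kernel-verified Lean document; each statement's English description precedes it below -/
import Mathlib

section
/- Let n be a natural number and let x_0,…,x_n and y_0,…,y_n be two families of pairwise distinct real numbers. Then the sample matrix M of the triangular lattice {(x_i,y_j) : i+j ≤ n} with respect to the bivariate monomials of degree at most n is nonsingular, i.e., det M ≠ 0; consequently, for any prescribed real data on the lattice points there is a unique bivariate polynomial of total degree at most n interpolating those data (the triangular lattice is poised). -/
/-- Index set of a triangular lattice of degree `n` in two dimensions:
pairs `(i, j)` with `i + j ≤ n`. -/
abbrev TriIdx (n : ℕ) := {p : Fin (n + 1) × Fin (n + 1) // p.1.val + p.2.val ≤ n}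

/-- The sample matrix of the triangular lattice `{(x_i, y_j) : i + j ≤ n}`
with respect to the bivariate monomials of total degree at most `n`. -/
def sampleMatrix2 (n : ℕ) (x y : Fin (n + 1) → ℝ) : Matrix (TriIdx n) (TriIdx n) ℝ :=
  Matrix.of fun r c => x r.val.1 ^ (c.val.1 : ℕ) * y r.val.2 ^ (c.val.2 : ℕ)


open Polynomial

/-- Core vanishing lemma in `ℝ[Y][X]` form. -/
lemma tri_core : ∀ (n : ℕ) (x y : Fin (n+1) → ℝ), Function.Injective x → Function.Injective y →
    ∀ F : Polynomial (Polynomial ℝ),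
    (∀ k, (F.coeff k).natDegree ≤ n - k) → F.natDegree ≤ n →
    (∀ i j : Fin (n+1), (i:ℕ) + (j:ℕ) ≤ n → (F.eval (Polynomial.C (x i))).eval (y j) = 0) →
    F = 0 := by
  intro n
  induction n with
  | zero =>
    intro x y hx hy F hdc hd hv
    have h0 : F = C (F.coeff 0) := by
      conv_lhs => rw [Polynomial.eq_C_of_natDegree_le_zero hd]
    have h1 : F.coeff 0 = C ((F.coeff 0).coeff 0) := by
      conv_lhs => rw [Polynomial.eq_C_of_natDegree_le_zero (hdc 0)]
    have hv0 := hv 0 0 (by simp)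
    rw [h0, h1] at hv0 ⊢
    simp only [Polynomial.eval_C] at hv0
    simp [hv0]
  | succ n IH =>
    intro x y hx hy F hdc hd hv
    set r : Polynomial ℝ := F.eval (Polynomial.C (x 0)) with hr
    have hrdeg : r.natDegree ≤ n + 1 := by
      rw [hr, Polynomial.eval_eq_sum]
      refine (Polynomial.natDegree_sum_le _ _).trans ?_
      rw [Finset.fold_max_le]
      refine ⟨Nat.zero_le _, fun k _ => ?_⟩
      calc ((F.coeff k) * (Polynomial.C (x 0)) ^ k).natDegree
          ≤ (F.coeff k).natDegree + ((Polynomial.C (x 0) : Polynomial ℝ) ^ k).natDegree :=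
            Polynomial.natDegree_mul_le
        _ ≤ (n + 1 - k) + 0 :=
            Nat.add_le_add (hdc k) (by rw [← Polynomial.C_pow, Polynomial.natDegree_C])
        _ ≤ n + 1 := by omega
    have hr0 : r = 0 := by
      refine Polynomial.eq_zero_of_natDegree_lt_card_of_eval_eq_zero r hy (fun j => ?_) ?_
      · exact hv 0 j (by simp; omega)
      · simpa using Nat.lt_succ_of_le hrdeg
    obtain ⟨Q, hQ⟩ : (X - Polynomial.C (Polynomial.C (x 0))) ∣ F := by
      have := Polynomial.X_sub_C_dvd_sub_C_eval (a := Polynomial.C (x 0)) (p := F)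
      rw [← hr, hr0] at this
      simpa using this
    have hrec : ∀ k, Q.coeff k = F.coeff (k+1) + Polynomial.C (x 0) * Q.coeff (k+1) := by
      intro k
      have : F.coeff (k+1) = Q.coeff k - Polynomial.C (x 0) * Q.coeff (k+1) := by
        rw [hQ, sub_mul, Polynomial.coeff_sub, Polynomial.coeff_X_mul, Polynomial.coeff_C_mul]
      rw [this]; ring
    have hQdc : ∀ k, (Q.coeff k).natDegree ≤ n - k := by
      have H : ∀ d k, Q.natDegree < k + d → (Q.coeff k).natDegree ≤ n - k := by
        intro d
        induction d with
        | zero => intro k hk; rw [Polynomial.coeff_eq_zero_of_natDegree_lt (by omega)]; simp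
        | succ d IHd =>
          intro k hk
          by_cases h : Q.natDegree < k
          · rw [Polynomial.coeff_eq_zero_of_natDegree_lt h]; simp
          · rw [hrec k]
            refine (Polynomial.natDegree_add_le _ _).trans ?_
            have h1 : (F.coeff (k+1)).natDegree ≤ n + 1 - (k+1) := hdc (k+1)
            have h2 : (Polynomial.C (x 0) * Q.coeff (k+1)).natDegree ≤ n - (k+1) :=
              (Polynomial.natDegree_C_mul_le _ _).trans (IHd (k+1) (by omega))
            omega
      intro k
      exact H (Q.natDegree + 1) k (by omega)
    have hQd : Q.natDegree ≤ n := by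
      by_cases hQ0 : Q = 0
      · simp [hQ0]
      · have := (Polynomial.monic_X_sub_C (Polynomial.C (x 0))).natDegree_mul' hQ0
        rw [← hQ, Polynomial.natDegree_X_sub_C] at this
        omega
    have hQv : ∀ i j : Fin (n+1), (i:ℕ) + (j:ℕ) ≤ n →
        (Q.eval (Polynomial.C ((x ∘ Fin.succ) i))).eval ((y ∘ Fin.castSucc) j) = 0 := by
      intro i j hij
      have hFv := hv i.succ j.castSucc (by simp [Fin.val_succ]; omega)
      rw [hQ] at hFv
      simp only [Polynomial.eval_mul, Polynomial.eval_sub, Polynomial.eval_X, Polynomial.eval_C,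
        ← Polynomial.C_sub, Function.comp_apply] at hFv ⊢
      rcases mul_eq_zero.mp hFv with h | h
      · exact absurd (hx (sub_eq_zero.mp h)) (Fin.succ_ne_zero i)
      · exact h
    have hQ0 : Q = 0 := IH (x ∘ Fin.succ) (y ∘ Fin.castSucc)
      (hx.comp (Fin.succ_injective (n+1))) (hy.comp (Fin.castSucc_injective (n+1))) Q hQdc hQd hQv
    rw [hQ, hQ0, mul_zero]


open Polynomial

noncomputable def Phi : MvPolynomial (Fin 2) ℝ →ₐ[ℝ] Polynomial (Polynomial ℝ) :=
  MvPolynomial.aeval ![Polynomial.X, Polynomial.C Polynomial.X]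

noncomputable def PhiEquiv : MvPolynomial (Fin 2) ℝ ≃ₐ[ℝ] Polynomial (Polynomial ℝ) :=
  (MvPolynomial.finSuccEquiv ℝ 1).trans (Polynomial.mapAlgEquiv
    ((MvPolynomial.finSuccEquiv ℝ 0).trans
      (Polynomial.mapAlgEquiv (MvPolynomial.isEmptyAlgEquiv ℝ (Fin 0)))))

lemma Phi_eq : Phi = PhiEquiv.toAlgHom := by
  apply MvPolynomial.algHom_ext
  intro i
  fin_cases i
  all_goals simp only [Fin.zero_eta, Fin.mk_one]
  · simp only [Phi, MvPolynomial.aeval_X, Matrix.cons_val_zero, PhiEquiv,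
      AlgEquiv.toAlgHom_eq_coe, AlgEquiv.coe_toAlgHom, AlgHom.coe_coe, AlgEquiv.trans_apply,
      MvPolynomial.finSuccEquiv_X_zero, Polynomial.coe_mapAlgEquiv, Polynomial.map_X]
  · have h : (1 : Fin 2) = (0 : Fin 1).succ := rfl
    simp only [Phi, MvPolynomial.aeval_X, Matrix.cons_val_one, Matrix.head_cons, PhiEquiv,
      AlgEquiv.toAlgHom_eq_coe, AlgEquiv.coe_toAlgHom, AlgHom.coe_coe, AlgEquiv.trans_apply, h,
      MvPolynomial.finSuccEquiv_X_succ, Polynomial.coe_mapAlgEquiv, Polynomial.map_C,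
      AlgEquiv.trans_apply, MvPolynomial.finSuccEquiv_X_zero, Polynomial.map_X]
    rw [show ((Fin.succ 0 : Fin 2)) = 1 from rfl, Matrix.cons_val_one, Matrix.cons_val_zero]
    congr 1
    simp [AlgEquiv.trans_apply, MvPolynomial.finSuccEquiv_X_zero, Polynomial.coe_mapAlgEquiv]

lemma Phi_inj : Function.Injective Phi := by
  rw [Phi_eq]; exact PhiEquiv.injective

lemma Phi_eval (a b : ℝ) (f : MvPolynomial (Fin 2) ℝ) :
    ((Phi f).eval (Polynomial.C a)).eval b = MvPolynomial.eval ![a, b] f := by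
  have h : ((Polynomial.evalRingHom b).comp ((Polynomial.evalRingHom (Polynomial.C a)).comp
      Phi.toRingHom)) = (MvPolynomial.eval ![a, b]) := by
    apply MvPolynomial.ringHom_ext
    · intro r; simp [Phi]
    · intro i; fin_cases i <;> simp [Phi]
  exact congrArg (fun g => g f) h

lemma Phi_monomial (m : Fin 2 →₀ ℕ) (c : ℝ) :
    Phi (MvPolynomial.monomial m c)
      = Polynomial.C (Polynomial.C c * Polynomial.X ^ m 1) * Polynomial.X ^ m 0 := by
  rw [MvPolynomial.monomial_eq]
  have hprod : m.prod (fun i e => (MvPolynomial.X i : MvPolynomial (Fin 2) ℝ) ^ e)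
      = MvPolynomial.X 0 ^ (m 0) * MvPolynomial.X 1 ^ (m 1) := by
    rw [Finsupp.prod_fintype]
    · simp [Fin.prod_univ_two]
    · intro i; simp
  rw [hprod]
  simp only [map_mul, map_pow]
  have h0 : Phi (MvPolynomial.X 0) = Polynomial.X := by simp [Phi]
  have h1 : Phi (MvPolynomial.X 1) = Polynomial.C Polynomial.X := by simp [Phi]
  have hC : Phi (MvPolynomial.C c) = Polynomial.C (Polynomial.C c) := by simp [Phi]
  rw [h0, h1, hC, ← Polynomial.C_pow]
  rw [← mul_assoc, mul_right_comm, ← Polynomial.C_mul]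

lemma Phi_coeff (f : MvPolynomial (Fin 2) ℝ) (k l : ℕ) :
    ((Phi f).coeff k).coeff l
      = MvPolynomial.coeff (Finsupp.single 0 k + Finsupp.single 1 l) f := by
  induction f using MvPolynomial.induction_on' with
  | add p q hp hq => simp [map_add, hp, hq]
  | monomial m c =>
    rw [Phi_monomial, Polynomial.coeff_C_mul, Polynomial.coeff_X_pow,
      MvPolynomial.coeff_monomial]
    have hval0 : ((Finsupp.single 0 k + Finsupp.single 1 l : Fin 2 →₀ ℕ)) 0 = k := by simp
    have hval1 : ((Finsupp.single 0 k + Finsupp.single 1 l : Fin 2 →₀ ℕ)) 1 = l := by simp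
    by_cases h0 : k = m 0
    · by_cases h1 : l = m 1
      · have hm : m = (Finsupp.single 0 k + Finsupp.single 1 l) := by
          ext i; fin_cases i <;> simp [Finsupp.single_apply, ← h0, ← h1]
        rw [if_pos h0, mul_one, if_pos hm, Polynomial.coeff_C_mul, Polynomial.coeff_X_pow,
          if_pos h1, mul_one]
      · have hm : m ≠ (Finsupp.single 0 k + Finsupp.single 1 l) := by
          intro h; exact h1 (by rw [h, hval1])
        rw [if_pos h0, mul_one, if_neg hm, Polynomial.coeff_C_mul, Polynomial.coeff_X_pow,
          if_neg h1, mul_zero]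
    · have hm : m ≠ (Finsupp.single 0 k + Finsupp.single 1 l) := by
        intro h; exact h0 (by rw [h, hval0])
      rw [if_neg h0, mul_zero, if_neg hm, Polynomial.coeff_zero]



/-- Vanishing lemma for the triangular lattice, `MvPolynomial` form. -/
lemma tri_vanish (n : ℕ) (x y : Fin (n+1) → ℝ) (hx : Function.Injective x)
    (hy : Function.Injective y) (f : MvPolynomial (Fin 2) ℝ) (hdeg : f.totalDegree ≤ n)
    (hv : ∀ i j : Fin (n+1), (i:ℕ) + (j:ℕ) ≤ n → MvPolynomial.eval ![x i, y j] f = 0) :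
    f = 0 := by
  set F := Phi f with hF
  have hsum : ∀ k l : ℕ,
      ((Finsupp.single 0 k + Finsupp.single 1 l : Fin 2 →₀ ℕ)).sum (fun _ e => e) = k + l := by
    intro k l
    rw [Finsupp.sum_fintype _ _ (fun _ => rfl), Fin.sum_univ_two]
    simp
  have hcz : ∀ k l, n < k + l → (F.coeff k).coeff l = 0 := by
    intro k l h
    rw [hF, Phi_coeff]
    apply MvPolynomial.coeff_eq_zero_of_totalDegree_lt
    show f.totalDegree < ((Finsupp.single 0 k + Finsupp.single 1 l : Fin 2 →₀ ℕ)).sum (fun _ e => e)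
    rw [hsum]; omega
  have hdc : ∀ k, (F.coeff k).natDegree ≤ n - k := by
    intro k
    rw [Polynomial.natDegree_le_iff_coeff_eq_zero]
    intro l hl
    exact hcz k l (by omega)
  have hdX : F.natDegree ≤ n := by
    rw [Polynomial.natDegree_le_iff_coeff_eq_zero]
    intro k hk
    ext l
    rw [Polynomial.coeff_zero]
    exact hcz k l (by omega)
  have hF0 : F = 0 := tri_core n x y hx hy F hdc hdX
    (fun i j hij => by rw [Phi_eval]; exact hv i j hij)
  apply Phi_inj
  rw [← hF, hF0, map_zero]


theorem sampleMatrix2_det_ne_zero_and_poised (n : ℕ) (x y : Fin (n + 1) → ℝ)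
    (hx : Function.Injective x) (hy : Function.Injective y) :
    (sampleMatrix2 n x y).det ≠ 0 ∧
    ∀ data : TriIdx n → ℝ,
      ∃! f : MvPolynomial (Fin 2) ℝ, f.totalDegree ≤ n ∧
        ∀ r : TriIdx n, MvPolynomial.eval ![x r.val.1, y r.val.2] f = data r := by
  classical
  set M := sampleMatrix2 n x y with hM
  set em : TriIdx n → (Fin 2 →₀ ℕ) := fun c =>
    Finsupp.single 0 (c.val.1 : ℕ) + Finsupp.single 1 (c.val.2 : ℕ) with hem
  have hem0 : ∀ c, em c 0 = (c.val.1 : ℕ) := by intro c; simp [hem]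
  have hem1 : ∀ c, em c 1 = (c.val.2 : ℕ) := by intro c; simp [hem]
  have hem_inj : Function.Injective em := by
    intro c c' h
    have h0 : (c.val.1 : ℕ) = (c'.val.1 : ℕ) := by rw [← hem0 c, ← hem0 c', h]
    have h1 : (c.val.2 : ℕ) = (c'.val.2 : ℕ) := by rw [← hem1 c, ← hem1 c', h]
    exact Subtype.ext (Prod.ext (Fin.ext h0) (Fin.ext h1))
  set polyOf : (TriIdx n → ℝ) → MvPolynomial (Fin 2) ℝ := fun v =>
    ∑ c : TriIdx n, MvPolynomial.monomial (em c) (v c) with hpoly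
  have hdeg : ∀ v, (polyOf v).totalDegree ≤ n := by
    intro v
    refine (MvPolynomial.totalDegree_finset_sum _ _).trans (Finset.sup_le fun c _ => ?_)
    refine (MvPolynomial.totalDegree_monomial_le _ _).trans ?_
    rw [hem, Finsupp.sum_fintype _ _ (fun _ => rfl), Fin.sum_univ_two]
    simpa using c.prop
  have heval : ∀ v (r : TriIdx n),
      MvPolynomial.eval ![x r.val.1, y r.val.2] (polyOf v) = M.mulVec v r := by
    intro v r
    rw [hpoly]
    simp only [map_sum]
    rw [Matrix.mulVec, dotProduct]
    refine Finset.sum_congr rfl fun c _ => ?_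
    rw [MvPolynomial.eval_monomial, Finsupp.prod_fintype _ _ (fun _ => pow_zero _),
      Fin.prod_univ_two, hem0, hem1]
    simp only [Matrix.cons_val_zero, Matrix.cons_val_one, Matrix.head_cons]
    rw [hM]
    show v c * _ = (x r.val.1 ^ (c.val.1 : ℕ) * y r.val.2 ^ (c.val.2 : ℕ)) * v c
    ring
  have hcoeff : ∀ v c0, MvPolynomial.coeff (em c0) (polyOf v) = v c0 := by
    intro v c0
    rw [hpoly, MvPolynomial.coeff_sum]
    rw [Finset.sum_eq_single c0]
    · simp [MvPolynomial.coeff_monomial]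
    · intro c _ hc
      rw [MvPolynomial.coeff_monomial, if_neg (fun h => hc (hem_inj h))]
    · intro h; exact absurd (Finset.mem_univ c0) h
  have hvanish : ∀ v, M.mulVec v = 0 → v = 0 := by
    intro v hmv
    have hf0 : polyOf v = 0 := by
      refine tri_vanish n x y hx hy _ (hdeg v) (fun i j hij => ?_)
      have := heval v ⟨(i, j), hij⟩
      rw [hmv] at this
      simpa using this
    funext c
    rw [← hcoeff v c, hf0]
    simp
  have hdet : M.det ≠ 0 := by
    intro h
    obtain ⟨v, hv0, hmv⟩ := (Matrix.exists_mulVec_eq_zero_iff).mpr h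
    exact hv0 (hvanish v hmv)
  refine ⟨hdet, fun data => ?_⟩
  set v : TriIdx n → ℝ := (M⁻¹).mulVec data with hv
  have hMv : M.mulVec v = data := by
    rw [hv, Matrix.mulVec_mulVec, Matrix.mul_nonsing_inv _ (isUnit_iff_ne_zero.mpr hdet),
      Matrix.one_mulVec]
  refine ⟨polyOf v, ⟨hdeg v, fun r => by rw [heval, hMv]⟩, ?_⟩
  intro g ⟨hgdeg, hgv⟩
  have hzero : g - polyOf v = 0 := by
    refine tri_vanish n x y hx hy _ ?_ (fun i j hij => ?_)
    · exact (MvPolynomial.totalDegree_sub _ _).trans (max_le hgdeg (hdeg v))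
    · have h1 := hgv ⟨(i, j), hij⟩
      have h2 : MvPolynomial.eval ![x i, y j] (polyOf v) = data ⟨(i, j), hij⟩ := by
        have := heval v ⟨(i, j), hij⟩
        rw [hMv] at this
        simpa using this
      simp only [map_sub]
      simp only [] at h1
      rw [show MvPolynomial.eval ![x i, y j] g = data ⟨(i,j), hij⟩ from h1, h2, sub_self]
  have := sub_eq_zero.mp hzero
  exact this
end

section
/- For all positive integers D and n, the following identity holds: (D+1) · ∑_{j=1}^n j · binomial(n−j+D, D) = ∑_{j=1}^n j · binomial(j+D, D). -/
/-!
Writing `i = n - j`, the left-hand sum is `∑_{i<n} (n - i) C(i+D, D)`, i.e. the sum of the first `n`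
partial sums of `C(i+D, D)`. By the hockey-stick identity each partial sum is `C(m+D, D+1)`, and
`(D+1) C(m+D, D+1) = m C(m+D, D)` term by term.
-/

open Finset

theorem Finset.sum_range_tsub_nsmul {M : Type*} [AddCommMonoid M] (f : ℕ → M) (n : ℕ) :
    ∑ i ∈ range n, (n - i) • f i = ∑ m ∈ range n, ∑ i ∈ range (m + 1), f i := by
  induction n with
  | zero => simp
  | succ n ih =>
    have split : ∀ i ∈ range (n + 1), (n + 1 - i) • f i = (n - i) • f i + f i := fun i hi => by
      rw [Nat.sub_add_comm (mem_range_succ_iff.mp hi), succ_nsmul]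
    rw [sum_range_succ (fun m => ∑ i ∈ range (m + 1), f i), ← ih, sum_congr rfl split,
      sum_add_distrib, sum_range_succ (fun i => (n - i) • f i), Nat.sub_self, zero_smul, add_zero]

theorem Finset.sum_Icc_one_eq_sum_range {M : Type*} [AddCommMonoid M] (f : ℕ → M) (n : ℕ) :
    ∑ j ∈ Icc 1 n, f j = ∑ i ∈ range n, f (i + 1) := by
  rw [← Ico_add_one_right_eq_Icc, sum_Ico_eq_sum_range, Nat.add_sub_cancel]
  simp only [add_comm 1]

theorem Finset.sum_Icc_one_reflect {M : Type*} [AddCommMonoid M] (f : ℕ → M) (n : ℕ) :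
    ∑ j ∈ Icc 1 n, f j = ∑ i ∈ range n, f (n - i) := by
  rw [sum_Icc_one_eq_sum_range, ← sum_range_reflect]
  refine sum_congr rfl fun i hi => ?_
  congr 1
  have := mem_range.mp hi
  omega

theorem Nat.sum_range_tsub_mul_add_choose (n D : ℕ) :
    ∑ i ∈ range n, (n - i) * (i + D).choose D = ∑ m ∈ range n, (m + 1 + D).choose (D + 1) := by
  simp only [← smul_eq_mul, sum_range_tsub_nsmul, Nat.sum_range_add_choose, add_right_comm]

theorem Nat.succ_mul_add_choose_succ (m D : ℕ) :
    (D + 1) * (m + D).choose (D + 1) = m * (m + D).choose D := by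
  rw [mul_comm, Nat.choose_succ_right_eq, Nat.add_sub_cancel, mul_comm]

theorem det_degree_equality_general (D n : ℕ) :
    (D + 1) * ∑ j ∈ Finset.Icc 1 n, j * Nat.choose (n - j + D) D
      = ∑ j ∈ Finset.Icc 1 n, j * Nat.choose (j + D) D := by
  calc (D + 1) * ∑ j ∈ Icc 1 n, j * (n - j + D).choose D
      = (D + 1) * ∑ i ∈ range n, (n - i) * (i + D).choose D := by
        rw [sum_Icc_one_reflect]
        refine congrArg _ (sum_congr rfl fun i hi => ?_)
        rw [Nat.sub_sub_self (mem_range.mp hi).le]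
    _ = ∑ i ∈ range n, (i + 1) * (i + 1 + D).choose D := by
        rw [Nat.sum_range_tsub_mul_add_choose, mul_sum]
        exact sum_congr rfl fun m _ => Nat.succ_mul_add_choose_succ (m + 1) D
    _ = ∑ j ∈ Icc 1 n, j * (j + D).choose D :=
        (sum_Icc_one_eq_sum_range (fun j => j * (j + D).choose D) n).symm

theorem det_degree_equality (D n : ℕ) (hD : 1 ≤ D) (hn : 1 ≤ n) :
    (D + 1) * ∑ j ∈ Finset.Icc 1 n, j * Nat.choose (n - j + D) D
      = ∑ j ∈ Finset.Icc 1 n, j * Nat.choose (j + D) D :=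
  det_degree_equality_general D n
end

section
/- Let D be a positive integer, n a natural number, and for each dimension k = 1,…,D let p_{k,0},…,p_{k,n} be n+1 pairwise distinct real numbers. Then the sample matrix M_D of the triangular lattice {(p_{1,k_1},…,p_{D,k_D}) : k_i ≥ 0, ∑_i k_i ≤ n} with respect to the D-variate monomials of total degree at most n is nonsingular, i.e., det M_D ≠ 0 (the triangular lattice is poised). -/
/-!
Expand in the Newton basis `∏ i, ∏ m < e i, (x i - p i m)` instead of the monomials
`∏ i, x i ^ e i`. Its sample matrix is `M_D` times the coefficient matrix of the change of
basis. At the node with index `k`, the basis element with index `e` vanishes unless `e ≤ k`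
componentwise, and the diagonal entries are products of differences of distinct nodes. So the
Newton sample matrix is triangular for a linear extension of the componentwise order with
nonzero diagonal; its determinant is nonzero, hence so is `det M_D`.
-/

/-- Index set of a triangular lattice of degree `n` in `D` dimensions:
multiindices `k ∈ {0,…,n}^D` with `∑ i, k i ≤ n`. -/
abbrev TriIdxD (n D : ℕ) := {k : Fin D → Fin (n + 1) // ∑ i, (k i : ℕ) ≤ n}

/-- The sample matrix of the triangular lattice
`{(p_{1,k_1},…,p_{D,k_D}) : ∑ k_i ≤ n}` with respect to the `D`-variate
monomials of total degree at most `n`. -/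
def sampleMatrixD (n D : ℕ) (p : Fin D → Fin (n + 1) → ℝ) :
    Matrix (TriIdxD n D) (TriIdxD n D) ℝ :=
  Matrix.of fun k e => ∏ i, p i (k.val i) ^ ((e.val i : ℕ))

open Polynomial Finset Lagrange

theorem Matrix.det_eq_prod_diag_of_not_le {α R : Type*} [PartialOrder α] [Fintype α]
    [DecidableEq α] [CommRing R] (M : Matrix α α R) (h : ∀ i j, ¬j ≤ i → M i j = 0) :
    M.det = ∏ i, M i i := by
  let _ : Fintype (LinearExtension α) := ‹Fintype α›
  let M' : Matrix (LinearExtension α) (LinearExtension α) R := M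
  have hM' : M'.IsLowerTriangular := fun i j hij => h i j fun hji =>
    (OrderDual.toDual_lt_toDual.mp hij).not_ge (toLinearExtension.monotone hji :)
  convert Matrix.det_of_isLowerTriangular M' hM' using 2 <;> rfl

theorem Polynomial.eval_eq_sum_fin {R : Type*} [Semiring R] {P : R[X]} {n : ℕ}
    (hP : P.natDegree < n) (x : R) : P.eval x = ∑ j : Fin n, P.coeff j * x ^ (j : ℕ) := by
  rw [eval_eq_sum_range' hP, Fin.sum_univ_eq_sum_range (fun j => P.coeff j * x ^ j)]

section

variable {n D : ℕ}

def basisSampleMatrixD (p : Fin D → Fin (n + 1) → ℝ) (q : Fin D → Fin (n + 1) → ℝ[X]) :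
    Matrix (TriIdxD n D) (TriIdxD n D) ℝ :=
  Matrix.of fun k e => ∏ i, (q i (e.val i)).eval (p i (k.val i))

/-- Column `e` lists the monomial coefficients of the basis element `∏ i, q i (e i)`. -/
def basisCoeffMatrixD (q : Fin D → Fin (n + 1) → ℝ[X]) :
    Matrix (TriIdxD n D) (TriIdxD n D) ℝ :=
  Matrix.of fun f e => ∏ i, (q i (e.val i)).coeff (f.val i)

theorem sampleMatrixD_mul_basisCoeffMatrixD (p : Fin D → Fin (n + 1) → ℝ)
    (q : Fin D → Fin (n + 1) → ℝ[X]) (hq : ∀ i l, (q i l).natDegree ≤ l) :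
    sampleMatrixD n D p * basisCoeffMatrixD q = basisSampleMatrixD p q := by
  ext k e
  set term : (Fin D → Fin (n + 1)) → ℝ :=
    fun f => ∏ i, (q i (e.val i)).coeff (f i) * p i (k.val i) ^ (f i : ℕ)
  -- `deg q i (e i) ≤ e i`, so only multiindices below `e` contribute; they lie in `TriIdxD n D`.
  have hsupport : ∀ f, term f ≠ 0 → ∑ i, (f i : ℕ) ≤ n := by
    intro f hf
    by_contra hlt
    obtain ⟨i, -, hi⟩ := exists_lt_of_sum_lt (e.2.trans_lt (not_le.mp hlt))
    refine hf (prod_eq_zero (mem_univ i) ?_)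
    rw [coeff_eq_zero_of_natDegree_lt ((hq i _).trans_lt hi), zero_mul]
  calc (sampleMatrixD n D p * basisCoeffMatrixD q) k e
      = ∑ f : TriIdxD n D, term f.val := by
        simp only [Matrix.mul_apply, sampleMatrixD, basisCoeffMatrixD, Matrix.of_apply, term,
          ← prod_mul_distrib, mul_comm]
    _ = ∑ f, term f := by
        rw [← sum_filter_of_ne fun f _ => hsupport f,
          sum_subtype (p := fun f => ∑ i, (f i : ℕ) ≤ n) _ (fun f => by simp) term]
    _ = ∏ i, ∑ j : Fin (n + 1), (q i (e.val i)).coeff j * p i (k.val i) ^ (j : ℕ) :=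
        (Fintype.prod_sum fun i (j : Fin (n + 1)) =>
          (q i (e.val i)).coeff j * p i (k.val i) ^ (j : ℕ)).symm
    _ = basisSampleMatrixD p q k e := by
        simp only [basisSampleMatrixD, Matrix.of_apply,
          eval_eq_sum_fin (Nat.lt_succ_of_le ((hq _ _).trans (Fin.is_le _)))]

theorem det_basisSampleMatrixD_nodal_ne_zero {p : Fin D → Fin (n + 1) → ℝ}
    (hp : ∀ i, Function.Injective (p i)) :
    (basisSampleMatrixD p fun i l => nodal (Iio l) (p i)).det ≠ 0 := by
  rw [Matrix.det_eq_prod_diag_of_not_le]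
  all_goals simp only [basisSampleMatrixD, Matrix.of_apply]
  · refine prod_ne_zero_iff.mpr fun k _ => prod_ne_zero_iff.mpr fun i _ => ?_
    exact eval_nodal_not_at_node fun m hm => (hp i).ne (mem_Iio.mp hm).ne'
  · intro k e hek
    obtain ⟨i, hi⟩ : ∃ i, k.val i < e.val i := by
      simpa [← Subtype.coe_le_coe, Pi.le_def] using hek
    exact prod_eq_zero (mem_univ i) (eval_nodal_at_node (mem_Iio.mpr hi))

end

theorem sampleMatrixD_det_ne_zero_general (n D : ℕ)
    (p : Fin D → Fin (n + 1) → ℝ) (hp : ∀ i, Function.Injective (p i)) :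
    (sampleMatrixD n D p).det ≠ 0 := by
  have hdeg : ∀ i (l : Fin (n + 1)), (nodal (Iio l) (p i)).natDegree ≤ l := fun i l => by
    rw [natDegree_nodal, Fin.card_Iio]
  have h := det_basisSampleMatrixD_nodal_ne_zero hp
  rw [← sampleMatrixD_mul_basisCoeffMatrixD p _ hdeg, Matrix.det_mul] at h
  exact left_ne_zero_of_mul h

theorem sampleMatrixD_det_ne_zero (n D : ℕ) (hD : 1 ≤ D)
    (p : Fin D → Fin (n + 1) → ℝ) (hp : ∀ i, Function.Injective (p i)) :
    (sampleMatrixD n D p).det ≠ 0 :=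
  sampleMatrixD_det_ne_zero_general n D p hp
end

section
/- Let D ≥ 2, let T ⊆ ℝ^D be a triangular lattice of degree n with distinct coordinates p_{i,0},…,p_{i,n} in each dimension i, and fix a dimension i and an index m ∈ {0,…,n}. Then the set obtained by taking the points of T whose i-th coordinate equals p_{i,m} and deleting the i-th coordinate from each such point is a triangular lattice of degree n−m in D−1 dimensions. -/
/-! Index a point of the slice by its lattice multi-index `k` with `k i = m`: the remaining
indices then sum to at most `n - m`, so the slice is the triangular lattice of degree `n - m`
whose coordinates in dimension `j` are the first `n - m + 1` values of `p (i.succAbove j)`.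
Conversely, inserting `m` at position `i` lifts any multi-index of that lattice back to `T`. -/

open Finset

/-- `T ⊆ ℝ^D` is a triangular lattice of degree `n` in `D` dimensions if for
each dimension there are `n+1` pairwise distinct coordinates `q i 0, …, q i n`
such that `T = {(q_{1,k_1},…,q_{D,k_D}) : k ∈ ℕ^D, ∑ k_i ≤ n}`. -/
def IsTriangularLattice (D n : ℕ) (T : Set (Fin D → ℝ)) : Prop :=
  ∃ q : Fin D → Fin (n + 1) → ℝ, (∀ i, Function.Injective (q i)) ∧
    T = {x | ∃ k : Fin D → Fin (n + 1), (∑ j, (k j : ℕ)) ≤ n ∧ x = fun j => q j (k j)}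

namespace Fin

variable {D n : ℕ}

theorem sum_le_iff_sum_succAbove_le (k : Fin (D + 1) → ℕ) (i : Fin (D + 1)) (hi : k i ≤ n) :
    ∑ j, k j ≤ n ↔ ∑ j, k (i.succAbove j) ≤ n - k i := by
  rw [sum_univ_succAbove k i]
  omega

theorem succAbove_le_sub_of_sum_le {k : Fin (D + 1) → ℕ} (hk : ∑ j, k j ≤ n)
    (i : Fin (D + 1)) (j : Fin D) : k (i.succAbove j) ≤ n - k i := by
  have hi : k i ≤ n := (single_le_sum (fun _ _ => Nat.zero_le _) (mem_univ i)).trans hk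
  exact (single_le_sum (f := fun l => k (i.succAbove l)) (fun _ _ => Nat.zero_le _)
    (mem_univ j)).trans ((sum_le_iff_sum_succAbove_le k i hi).1 hk)

end Fin

theorem slice_isTriangularLattice_general (D n : ℕ)
    (p : Fin (D + 1) → Fin (n + 1) → ℝ) (hp : ∀ i, Function.Injective (p i))
    (T : Set (Fin (D + 1) → ℝ))
    (hT : T = {x | ∃ k : Fin (D + 1) → Fin (n + 1),
        (∑ j, (k j : ℕ)) ≤ n ∧ x = fun j => p j (k j)})
    (i : Fin (D + 1)) (m : Fin (n + 1)) :
    IsTriangularLattice D (n - (m : ℕ))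
      {y : Fin D → ℝ | ∃ x ∈ T, x i = p i m ∧ y = i.removeNth x} := by
  subst hT
  have hle : n - (m : ℕ) + 1 ≤ n + 1 := by omega
  refine ⟨fun j => p (i.succAbove j) ∘ Fin.castLE hle,
    fun j => (hp _).comp (Fin.castLE_injective hle), Set.ext fun y => ⟨?_, ?_⟩⟩
  · rintro ⟨_, ⟨k, hk, rfl⟩, hki, rfl⟩
    obtain rfl := hp i hki
    have hsum := (Fin.sum_le_iff_sum_succAbove_le (fun j => (k j : ℕ)) i (Fin.is_le _)).1 hk
    exact ⟨fun j => ⟨k (i.succAbove j),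
      Nat.lt_succ_of_le (Fin.succAbove_le_sub_of_sum_le hk i j)⟩, hsum, rfl⟩
  · rintro ⟨k, hk, rfl⟩
    let K : Fin (D + 1) → Fin (n + 1) := i.insertNth m (Fin.castLE hle ∘ k)
    have hK : ∑ j, (K j : ℕ) ≤ n := by
      refine (Fin.sum_le_iff_sum_succAbove_le (fun j => (K j : ℕ)) i ?_).2 ?_
      · simpa [K] using Fin.is_le m
      · simpa [K] using hk
    exact ⟨_, ⟨K, hK, rfl⟩, by simp [K], by ext; simp [K, Fin.removeNth]⟩

/-- Any `p_{i,m}`-slice of a triangular lattice of degree `n` in `D + 1 ≥ 2`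
dimensions, after deleting the `i`-th coordinate, is a triangular lattice of
degree `n − m` in `D` dimensions. -/
theorem slice_isTriangularLattice (D n : ℕ) (hD : 1 ≤ D)
    (p : Fin (D + 1) → Fin (n + 1) → ℝ) (hp : ∀ i, Function.Injective (p i))
    (T : Set (Fin (D + 1) → ℝ))
    (hT : T = {x | ∃ k : Fin (D + 1) → Fin (n + 1),
        (∑ j, (k j : ℕ)) ≤ n ∧ x = fun j => p j (k j)})
    (i : Fin (D + 1)) (m : Fin (n + 1)) :
    IsTriangularLattice D (n - (m : ℕ))
      {y : Fin D → ℝ | ∃ x ∈ T, x i = p i m ∧ y = i.removeNth x} :=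
  slice_isTriangularLattice_general D n p hp T hT i m
end
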